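/- arXiv:2102.06655 — 3 statements merged into one kernel-verified Lean document; each statement's English description precedes it below -/
import Mathlib

section
/- Under the hypothesis that val(T) = 0 whenever s ∈ T and s' ∉ T, the map sending each set T with (s,T) critical to T' = (T ∪ {s}) \ {s'} is an injection into the sets T' with (s',T') critical, and it preserves cardinality: |T'| = |T|. -/
open Finset

/-- Under the hypothesis that `val T = 0` whenever `s ∈ T` and `s' ∉ T`, the map
`T ↦ (T ∪ {s}) \ {s'}` maps sets `T` with `(s,T)` critical to sets `T'` with `(s',T')`
critical, preserves cardinality, and is injective on critical sets. -/
theorem stmt3 {α : Type*} [Fintype α] [DecidableEq α]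
    (val : Finset α → ℚ) (s s' : α) (hss : s ≠ s')
    (h : ∀ T : Finset α, s ∈ T → s' ∉ T → val T = 0) :
    (∀ T : Finset α, T ⊆ Finset.univ.erase s →
        val (insert s T) = 1 → val T = 0 →
      ((insert s T).erase s' ⊆ Finset.univ.erase s' ∧
       val (insert s' ((insert s T).erase s')) = 1 ∧
       val ((insert s T).erase s') = 0 ∧
       ((insert s T).erase s').card = T.card)) ∧
    Set.InjOn (fun T : Finset α => (insert s T).erase s')
      {T : Finset α | T ⊆ Finset.univ.erase s ∧ val (insert s T) = 1 ∧ val T = 0} := by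
  have key : ∀ T : Finset α, T ⊆ Finset.univ.erase s → val (insert s T) = 1 →
      s' ∈ insert s T ∧ s ∉ T := by
    intro T hT h1
    have hsT : s ∉ T := fun hs => (Finset.mem_erase.mp (hT hs)).1 rfl
    refine ⟨?_, hsT⟩
    by_contra hs'
    have := h (insert s T) (mem_insert_self s T) hs'
    rw [h1] at this; norm_num at this
  constructor
  · intro T hT h1 h0
    obtain ⟨hs'mem, hsT⟩ := key T hT h1
    have hins : insert s' ((insert s T).erase s') = insert s T :=
      Finset.insert_erase hs'mem
    refine ⟨fun x hx => mem_erase.mpr ⟨(mem_erase.mp hx).1, mem_univ x⟩, ?_, ?_, ?_⟩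
    · rw [hins]; exact h1
    · exact h _ (mem_erase.mpr ⟨hss, mem_insert_self s T⟩)
        (fun hc => (mem_erase.mp hc).1 rfl)
    · rw [Finset.card_erase_of_mem hs'mem, Finset.card_insert_of_notMem hsT]; omega
  · intro T1 hT1 T2 hT2 heq
    obtain ⟨hs'1, hs1⟩ := key T1 hT1.1 hT1.2.1
    obtain ⟨hs'2, hs2⟩ := key T2 hT2.1 hT2.2.1
    have : insert s T1 = insert s T2 := by
      rw [← Finset.insert_erase hs'1, ← Finset.insert_erase hs'2]
      simpa using congrArg (insert s') heq
    have := congrArg (Finset.erase · s) this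
    simpa [Finset.erase_insert hs1, Finset.erase_insert hs2] using this
end

section
/- Let val : 2^S → {0,1} and define the complementary value v̄(T) = 1 − val(S \ T). Then for every element of a partition S_1,…,S_n of S, the importance of S_i with respect to val equals the importance of S_i with respect to v̄. -/
open Finset

lemma compl_biUnion_part {α : Type*} [Fintype α] [DecidableEq α] {n : ℕ}
    (P : Fin n → Finset α)
    (hdisj : ∀ i j : Fin n, i ≠ j → Disjoint (P i) (P j))
    (hcover : Finset.univ.biUnion P = (Finset.univ : Finset α))
    (p : Fin n → Prop) [DecidablePred p] :
    Finset.univ \ (Finset.univ.filter p).biUnion P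
      = (Finset.univ.filter fun k => ¬ p k).biUnion P := by
  ext a
  simp only [mem_sdiff, mem_biUnion, mem_filter, mem_univ, true_and]
  have ha : a ∈ Finset.univ.biUnion P := by rw [hcover]; exact mem_univ a
  obtain ⟨k, -, hk⟩ := mem_biUnion.mp ha
  constructor
  · intro h
    exact ⟨k, fun hp => h ⟨k, hp, hk⟩, hk⟩
  · rintro ⟨j, hj, haj⟩ ⟨m, hm, ham⟩
    rcases eq_or_ne j m with rfl | hne
    · exact hj hm
    · exact absurd ham (Finset.disjoint_left.mp (hdisj j m hne) haj)

lemma sdiff_part {α : Type*} [Fintype α] [DecidableEq α] {n : ℕ}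
    (P : Fin n → Finset α)
    (hdisj : ∀ i j : Fin n, i ≠ j → Disjoint (P i) (P j))
    (p : Fin n → Prop) [DecidablePred p] (i : Fin n) :
    (Finset.univ.filter p).biUnion P \ P i
      = (Finset.univ.filter fun k => p k ∧ k ≠ i).biUnion P := by
  ext a
  simp only [mem_sdiff, mem_biUnion, mem_filter, mem_univ, true_and]
  constructor
  · rintro ⟨⟨j, hj, haj⟩, hni⟩
    refine ⟨j, ⟨hj, ?_⟩, haj⟩
    rintro rfl; exact hni haj
  · rintro ⟨j, ⟨hj, hne⟩, haj⟩
    exact ⟨⟨j, hj, haj⟩, fun hai =>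
      absurd hai (Finset.disjoint_left.mp (hdisj j i hne) haj)⟩

/-- The importance of a part is invariant under complementing the value function
(`v̄(T) = 1 − val(S \ T)`). -/
theorem stmt7 {α : Type*} [Fintype α] [DecidableEq α] {n : ℕ}
    (P : Fin n → Finset α)
    (hdisj : ∀ i j : Fin n, i ≠ j → Disjoint (P i) (P j))
    (hcover : Finset.univ.biUnion P = (Finset.univ : Finset α))
    (val : Finset α → ℚ) (i : Fin n) :
    (1 / (n.factorial : ℚ)) * ∑ σ : Equiv.Perm (Fin n),
        (val ((Finset.univ.filter fun k => σ i ≤ σ k).biUnion P) -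
         val (((Finset.univ.filter fun k => σ i ≤ σ k).biUnion P) \ P i))
      = (1 / (n.factorial : ℚ)) * ∑ σ : Equiv.Perm (Fin n),
        ((1 - val (Finset.univ \ ((Finset.univ.filter fun k => σ i ≤ σ k).biUnion P))) -
         (1 - val (Finset.univ \
            (((Finset.univ.filter fun k => σ i ≤ σ k).biUnion P) \ P i)))) := by
  congr 1
  refine (Fintype.sum_equiv (Equiv.mulLeft (Fin.revPerm : Equiv.Perm (Fin n)))
    _ _ fun σ => ?_).symm
  have hτ : ∀ k, (Equiv.mulLeft (Fin.revPerm : Equiv.Perm (Fin n)) σ) k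
      = Fin.rev (σ k) := fun k => rfl
  have hfilt : (Finset.univ.filter fun k =>
        (Equiv.mulLeft (Fin.revPerm : Equiv.Perm (Fin n)) σ) i
          ≤ (Equiv.mulLeft (Fin.revPerm : Equiv.Perm (Fin n)) σ) k)
      = Finset.univ.filter fun k => σ k ≤ σ i := by
    apply filter_congr
    intro k _
    simp [hτ, Fin.rev_le_rev]
  -- abbreviations
  set T : Finset α := (Finset.univ.filter fun k => σ i ≤ σ k).biUnion P with hT
  have h1 : Finset.univ \ (T \ P i)
      = (Finset.univ.filter fun k =>
          (Equiv.mulLeft (Fin.revPerm : Equiv.Perm (Fin n)) σ) i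
            ≤ (Equiv.mulLeft (Fin.revPerm : Equiv.Perm (Fin n)) σ) k).biUnion P := by
    rw [hfilt, hT, sdiff_part P hdisj, compl_biUnion_part P hdisj hcover]
    congr 1
    apply filter_congr
    intro k _
    simp only [not_and, ne_eq, not_not, eq_iff_iff]
    constructor
    · intro h
      rcases le_total (σ k) (σ i) with hle | hle
      · exact hle
      · rw [h hle]
    · intro h hle
      exact σ.injective (le_antisymm h hle)
  have h2 : Finset.univ \ T
      = ((Finset.univ.filter fun k =>
          (Equiv.mulLeft (Fin.revPerm : Equiv.Perm (Fin n)) σ) i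
            ≤ (Equiv.mulLeft (Fin.revPerm : Equiv.Perm (Fin n)) σ) k).biUnion P)
        \ P i := by
    rw [hfilt, hT, sdiff_part P hdisj, compl_biUnion_part P hdisj hcover]
    congr 1
    apply filter_congr
    intro k _
    simp only [not_le, ne_eq, eq_iff_iff]
    constructor
    · intro h
      refine ⟨h.le, ?_⟩
      rintro rfl
      exact absurd rfl h.ne
    · rintro ⟨hle, hne⟩
      exact lt_of_le_of_ne hle (fun he => hne (σ.injective he))
  rw [h1, h2]
  ring
end

section
/- Let valC : 2^S → [0,1] and valT : 2^S → {0,1} be two value functions on subsets of a finite partitioned set such that for all T, valT(T) = 1 iff valC(T) = 1. If the importance of a part S_i with respect to valC is zero, then its importance with respect to valT is also zero. -/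
open Finset

/-- If `valC` is a monotone `[0,1]`-valued value function, `valT` is `{0,1}`-valued, and
`valT(T) = 1 ↔ valC(T) = 1`, then vanishing of the importance of a part w.r.t. `valC`
implies vanishing of its importance w.r.t. `valT`. -/
theorem stmt15 {α : Type*} [Fintype α] [DecidableEq α] {n : ℕ}
    (P : Fin n → Finset α)
    (hdisj : ∀ i j : Fin n, i ≠ j → Disjoint (P i) (P j))
    (hcover : Finset.univ.biUnion P = (Finset.univ : Finset α))
    (valC valT : Finset α → ℚ)
    (hC0 : ∀ T, 0 ≤ valC T) (hC1 : ∀ T, valC T ≤ 1)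
    (hCmono : ∀ T T' : Finset α, T ⊆ T' → valC T ≤ valC T')
    (hT01 : ∀ T, valT T = 0 ∨ valT T = 1)
    (hiff : ∀ T, valT T = 1 ↔ valC T = 1)
    (i : Fin n)
    (hzero : (1 / (n.factorial : ℚ)) * ∑ σ : Equiv.Perm (Fin n),
        (valC ((Finset.univ.filter fun k => σ i ≤ σ k).biUnion P) -
         valC (((Finset.univ.filter fun k => σ i ≤ σ k).biUnion P) \ P i)) = 0) :
    (1 / (n.factorial : ℚ)) * ∑ σ : Equiv.Perm (Fin n),
        (valT ((Finset.univ.filter fun k => σ i ≤ σ k).biUnion P) -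
         valT (((Finset.univ.filter fun k => σ i ≤ σ k).biUnion P) \ P i)) = 0 := by
  have hfac : (1 / (n.factorial : ℚ)) ≠ 0 := by
    simp [Nat.factorial_ne_zero]
  rw [mul_eq_zero] at hzero
  rcases hzero with h | hsum
  · exact absurd h hfac
  · have hnn : ∀ σ ∈ (Finset.univ : Finset (Equiv.Perm (Fin n))),
        0 ≤ valC ((Finset.univ.filter fun k => σ i ≤ σ k).biUnion P) -
         valC (((Finset.univ.filter fun k => σ i ≤ σ k).biUnion P) \ P i) := by
      intro σ _
      have := hCmono _ _ (Finset.sdiff_subset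
        (s := (Finset.univ.filter fun k => σ i ≤ σ k).biUnion P) (t := P i))
      linarith
    have hall := (Finset.sum_eq_zero_iff_of_nonneg hnn).mp hsum
    rw [mul_eq_zero]
    right
    apply Finset.sum_eq_zero
    intro σ hσ
    set T := (Finset.univ.filter fun k => σ i ≤ σ k).biUnion P with hT
    have hCeq : valC T = valC (T \ P i) := by
      have := hall σ hσ
      linarith
    have hsub : T \ P i ⊆ T := Finset.sdiff_subset
    have hTeq : valT T = valT (T \ P i) := by
      rcases hT01 T with h0 | h1
      · rcases hT01 (T \ P i) with h0' | h1'
        · rw [h0, h0']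
        · have hc : valC (T \ P i) = 1 := (hiff _).mp h1'
          have hc2 : valC T = 1 := by rw [hCeq, hc]
          have := (hiff T).mpr hc2
          rw [h0] at this; norm_num at this
      · have hc : valC T = 1 := (hiff _).mp h1
        have hc2 : valC (T \ P i) = 1 := by rw [← hCeq, hc]
        rw [h1, (hiff _).mpr hc2]
    rw [hTeq, sub_self]
end
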